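/- Let A be an M × N real matrix with nonnegative entries, where M < N. Define F_A(λ_1,...,λ_N) = Σ_{S ⊆ {1,...,N}, |S| = M} per(A_S) · Π_{j ∈ S} λ_j, where A_S is the submatrix of A on columns S and per denotes the permanent. Then F_A, viewed as a polynomial with complex arguments, is either identically zero or H-stable: if F_A is not the zero polynomial, then F_A(z_1,...,z_N) ≠ 0 whenever Re(z_j) > 0 for all 1 ≤ j ≤ N. -/

import Mathlib

/-!
For `z, w` in the open right half-plane `ℍ`, the value at `w` of `∏ⱼ (1 + zⱼ ∂/∂wⱼ) p` does not
vanish when `p` does not vanish on `ℍⁿ`: along each coordinate line one factor acts as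
`q ↦ q + z q'`, and `q(w) + z q'(w) ≠ 0` because `Re (q'(w) / q(w)) = Σ Re (1 / (w - r)) ≥ 0`
over the roots `r` of `q`, all of which have `Re r ≤ 0`. At `w = 0` this value is the multiaffine
part of `p` evaluated at `z`, and for `p = ∏ᵢ (Σⱼ Aᵢⱼ wⱼ)` the multiaffine part is `F_A`.
The limit `w = (ε, …, ε)`, `ε → 0⁺`, is taken by a Hurwitz-type argument on the complex line
through a zero of `F_A` in `ℍⁿ` and a point where `F_A` does not vanish: polynomials of bounded
degree with no zero in a disc satisfy `|P(s)| ≤ (3/2)^deg |P(0)|` on the half disc, so their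
limit, vanishing at the centre, vanishes on the half disc and hence identically.
-/

/-- The permanent of a square real matrix. -/
noncomputable def permanent {n : ℕ} (B : Matrix (Fin n) (Fin n) ℝ) : ℝ :=
  ∑ σ : Equiv.Perm (Fin n), ∏ i, B i (σ i)

/-- A multivariate real polynomial is H-stable if it does not vanish at any point
all of whose coordinates have positive real part. -/
def Hstable {σ : Type*} (p : MvPolynomial σ ℝ) : Prop :=
  ∀ z : σ → ℂ, (∀ i, 0 < (z i).re) → MvPolynomial.aeval z p ≠ 0

/-- The polynomial `F_A = Σ_{|S| = M} per(A_S) Π_{j ∈ S} X_j`. -/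
noncomputable def FApoly {M N : ℕ} (A : Matrix (Fin M) (Fin N) ℝ) :
    MvPolynomial (Fin N) ℝ :=
  ∑ S ∈ (Finset.powersetCard M (Finset.univ : Finset (Fin N))).attach,
    MvPolynomial.C (permanent (Matrix.of fun i k =>
      A i ((S.1.orderIsoOfFin ((Finset.mem_powersetCard.mp S.2).2)) k))) *
      ∏ j ∈ S.1, MvPolynomial.X j

open Polynomial Filter Topology Metric Finset

namespace Polynomial

theorem re_eval_derivative_div_eval_nonneg {q : ℂ[X]}
    (hq : ∀ x : ℂ, 0 < x.re → q.eval x ≠ 0) {w : ℂ} (hw : 0 < w.re) :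
    0 ≤ (q.derivative.eval w / q.eval w).re := by
  rw [(IsAlgClosed.splits q).eval_derivative_div_eval_of_ne_zero (hq w hw),
    ← Complex.coe_reAddGroupHom, map_multiset_sum, Multiset.map_map]
  refine Multiset.sum_nonneg fun x hx => ?_
  obtain ⟨r, hr, rfl⟩ := Multiset.mem_map.1 hx
  have hr : r.re ≤ 0 := not_lt.1 fun h => hq r h (isRoot_of_mem_roots hr)
  have : 0 < (w - r).re := by rw [Complex.sub_re]; linarith
  simp only [Function.comp_apply, Complex.coe_reAddGroupHom, one_div, Complex.inv_re]
  exact div_nonneg this.le (Complex.normSq_nonneg _)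

theorem eval_add_mul_eval_derivative_ne_zero {q : ℂ[X]}
    (hq : ∀ x : ℂ, 0 < x.re → q.eval x ≠ 0) {w z : ℂ} (hw : 0 < w.re) (hz : 0 < z.re) :
    q.eval w + z * q.derivative.eval w ≠ 0 := by
  intro h
  have hz0 : z ≠ 0 := fun h0 => by simp [h0] at hz
  have hρ : q.derivative.eval w / q.eval w = -z⁻¹ := by
    field_simp [hq w hw]
    linear_combination h
  have hre := re_eval_derivative_div_eval_nonneg hq hw
  rw [hρ, Complex.neg_re, Complex.inv_re] at hre
  have : 0 < z.re / Complex.normSq z := div_pos hz (Complex.normSq_pos.2 hz0)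
  linarith

theorem norm_eval_le_of_ne_zero_on_closedBall {P : ℂ[X]} {δ : ℝ}
    (hP : ∀ s ∈ closedBall (0 : ℂ) δ, P.eval s ≠ 0) {s : ℂ} (hs : ‖s‖ ≤ δ / 2) :
    ‖P.eval s‖ ≤ (3 / 2) ^ P.natDegree * ‖P.eval 0‖ := by
  have hroot : ∀ r ∈ P.roots, δ < ‖r‖ := fun r hr => not_le.1 fun h =>
    hP r (mem_closedBall_zero_iff.2 h) (isRoot_of_mem_roots hr)
  have hsplit := IsAlgClosed.splits P
  have hprod (m : Multiset ℂ) : ‖m.prod‖ = (m.map (‖·‖)).prod := map_multiset_prod normHom m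
  rw [hsplit.eval_eq_prod_roots, hsplit.eval_eq_prod_roots, norm_mul, norm_mul, mul_left_comm,
    hprod, hprod, Multiset.map_map, Multiset.map_map]
  gcongr
  calc (P.roots.map ((‖·‖) ∘ (s - ·))).prod
      ≤ (P.roots.map fun r => 3 / 2 * ‖(0 : ℂ) - r‖).prod := by
        refine Multiset.prod_map_le_prod_map₀ _ _ (fun _ _ => norm_nonneg _) fun r hr => ?_
        have := hroot r hr
        simp only [Function.comp_apply, zero_sub, norm_neg]
        linarith [norm_sub_le s r]
    _ = (3 / 2) ^ Multiset.card P.roots * (P.roots.map ((‖·‖) ∘ ((0 : ℂ) - ·))).prod := by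
        rw [Multiset.prod_map_mul, Multiset.map_const', Multiset.prod_replicate]
        rfl
    _ ≤ (3 / 2) ^ P.natDegree * (P.roots.map ((‖·‖) ∘ ((0 : ℂ) - ·))).prod := by
        refine mul_le_mul_of_nonneg_right (pow_le_pow_right₀ (by norm_num) (card_roots' P)) ?_
        exact Multiset.prod_nonneg fun _ h => by
          obtain ⟨r, -, rfl⟩ := Multiset.mem_map.1 h
          exact norm_nonneg _

theorem eq_zero_of_tendsto_eval {ι : Type*} {l : Filter ι} [l.NeBot]
    {P : ι → ℂ[X]} {T : ℂ[X]} {d : ℕ} {δ : ℝ} (hδ : 0 < δ)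
    (hP : ∀ᶠ i in l, (P i).natDegree ≤ d ∧ ∀ s ∈ closedBall (0 : ℂ) δ, (P i).eval s ≠ 0)
    (hT : ∀ s, Tendsto (fun i => (P i).eval s) l (𝓝 (T.eval s))) (h0 : T.eval 0 = 0) :
    T = 0 := by
  have hball : closedBall (0 : ℂ) (δ / 2) ⊆ {s | T.IsRoot s} := by
    intro s hs
    have hle : ‖T.eval s‖ ≤ (3 / 2) ^ d * ‖T.eval 0‖ :=
      le_of_tendsto_of_tendsto (hT s).norm ((hT 0).norm.const_mul _) <| hP.mono
        fun i ⟨hdeg, hne⟩ => (norm_eval_le_of_ne_zero_on_closedBall hne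
          (mem_closedBall_zero_iff.1 hs)).trans <|
          mul_le_mul_of_nonneg_right (pow_le_pow_right₀ (by norm_num) hdeg) (norm_nonneg _)
    rw [h0, norm_zero, mul_zero] at hle
    exact norm_le_zero_iff.1 hle
  exact eq_zero_of_infinite_isRoot T <|
    (infinite_of_mem_nhds 0 (closedBall_mem_nhds 0 (half_pos hδ))).mono hball

end Polynomial

section DiffEval

variable {σ K R S : Type*} [Fintype σ] [CommRing K] [CommRing R] [Algebra K R]
  [CommRing S] [Algebra K S]

/-- The value at `w` of `(1 + z d/dw) wⁿ`; at `n = 0` the truncated `n - 1` is harmless, since the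
second term carries the factor `n`. -/
def diffMonomial (n : ℕ) (z w : R) : R := w ^ n + n * z * w ^ (n - 1)

/-- The value at `w` of `∏ⱼ (1 + zⱼ ∂/∂wⱼ) p`. At `w = 0` it is the multiaffine part of `p`
evaluated at `z`. -/
noncomputable def diffEval (p : MvPolynomial σ K) (z w : σ → R) : R :=
  (AddMonoidAlgebra.coeff p).sum fun α c => algebraMap K R c * ∏ j, diffMonomial (α j) (z j) (w j)

theorem diffEval_eq_sum (p : MvPolynomial σ K) (z w : σ → R) :
    diffEval p z w =
      ∑ α ∈ p.support, algebraMap K R (p.coeff α) * ∏ j, diffMonomial (α j) (z j) (w j) :=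
  MvPolynomial.sum_def

theorem diffEval_zero_left (p : MvPolynomial σ K) (w : σ → R) :
    diffEval p 0 w = MvPolynomial.aeval w p := by
  simp [diffEval_eq_sum, diffMonomial, MvPolynomial.aeval_eq_eval₂Hom, MvPolynomial.eval₂_eq']

theorem diffEval_sum_monomial {ι : Type*} (s : Finset ι) (α : ι → σ →₀ ℕ) (a : ι → K)
    (z w : σ → R) :
    diffEval (∑ i ∈ s, MvPolynomial.monomial (α i) (a i)) z w =
      ∑ i ∈ s, algebraMap K R (a i) * ∏ j, diffMonomial (α i j) (z j) (w j) := by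
  rw [diffEval, AddMonoidAlgebra.coeff_sum,
    ← Finsupp.sum_finsetSum_index (by simp) (by simp [add_mul])]
  exact sum_congr rfl fun i _ => MvPolynomial.sum_monomial_eq (by simp)

theorem eval_diffEval (p : MvPolynomial σ K) (z w : σ → S[X]) (s : S) :
    (diffEval p z w).eval s = diffEval p (fun j => (z j).eval s) (fun j => (w j).eval s) := by
  simp [diffEval_eq_sum, diffMonomial, eval_finsetSum, eval_prod, Polynomial.algebraMap_apply]

theorem diffEval_eq_sum_mul [DecidableEq σ] (p : MvPolynomial σ K) (z w : σ → R) (j : σ) :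
    diffEval p z w = ∑ α ∈ p.support, (algebraMap K R (p.coeff α) *
      ∏ k ∈ univ.erase j, diffMonomial (α k) (z k) (w k)) * diffMonomial (α j) (z j) (w j) := by
  simp_rw [diffEval_eq_sum, mul_assoc, prod_erase_mul _ _ (mem_univ j)]

theorem diffEval_eq_eval_add_mul_eval_derivative [DecidableEq σ]
    (p : MvPolynomial σ K) (z w : σ → S) (j : σ) :
    let q := diffEval p (fun k => C (Function.update z j 0 k)) (Function.update (C ∘ w) j X)
    diffEval p z w = q.eval (w j) + z j * q.derivative.eval (w j) := by
  intro q
  have hq : q = ∑ α ∈ p.support, C (algebraMap K S (p.coeff α) *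
      ∏ k ∈ univ.erase j, diffMonomial (α k) (z k) (w k)) * X ^ α j := by
    simp only [q]
    rw [diffEval_eq_sum_mul _ _ _ j]
    refine sum_congr rfl fun α _ => ?_
    rw [C_mul, map_prod, Polynomial.algebraMap_apply]
    congr 2
    · refine prod_congr rfl fun k hk => ?_
      simp [Function.update_of_ne (ne_of_mem_erase hk), diffMonomial]
    · simp [diffMonomial]
  rw [hq, derivative_sum, eval_finsetSum, eval_finsetSum, mul_sum, ← sum_add_distrib,
    diffEval_eq_sum_mul _ _ _ j]
  refine sum_congr rfl fun α _ => ?_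
  simp only [derivative_C_mul_X_pow, eval_mul, eval_C, eval_pow, eval_X, diffMonomial]
  ring

theorem diffEval_ne_zero {p : MvPolynomial σ ℝ} (hp : Hstable p) {z w : σ → ℂ}
    (hz : ∀ j, 0 < (z j).re) (hw : ∀ j, 0 < (w j).re) : diffEval p z w ≠ 0 := by
  classical
  suffices ∀ J : Finset σ, ∀ z : σ → ℂ, (∀ j ∉ J, z j = 0) → (∀ j ∈ J, 0 < (z j).re) →
      ∀ w : σ → ℂ, (∀ j, 0 < (w j).re) → diffEval p z w ≠ 0 from
    this univ z (by simp) (fun j _ => hz j) w hw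
  intro J
  induction J using Finset.induction_on with
  | empty =>
    intro z hz _ w hw
    obtain rfl : z = 0 := funext fun j => hz j (notMem_empty j)
    rw [diffEval_zero_left]
    exact hp w hw
  | insert j J hj ih =>
    intro z hz0 hz w hw
    rw [diffEval_eq_eval_add_mul_eval_derivative p z w j]
    refine eval_add_mul_eval_derivative_ne_zero (fun x hx => ?_) (hw j) (hz j (mem_insert_self j J))
    rw [eval_diffEval]
    refine ih _ (fun k hk => ?_) (fun k hk => ?_) _ (fun k => ?_)
    · rcases eq_or_ne k j with rfl | hkj
      · simp
      · simpa [Function.update_of_ne hkj] using hz0 k (by simp [hkj, hk])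
    · have hkj : k ≠ j := ne_of_mem_of_not_mem hk hj
      simpa [Function.update_of_ne hkj] using hz k (mem_insert_of_mem hk)
    · rcases eq_or_ne k j with rfl | hkj
      · simpa using hx
      · simpa [Function.update_of_ne hkj] using hw k

theorem natDegree_diffEval_le {F : Type*} [Field F] [Algebra K F] (p : MvPolynomial σ K)
    {z : σ → F[X]} (hz : ∀ j, (z j).natDegree ≤ 1) (w : σ → F) :
    (diffEval p z fun j => C (w j)).natDegree ≤ Fintype.card σ := by
  rw [diffEval_eq_sum]
  refine natDegree_sum_le_of_forall_le _ _ fun α _ => ?_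
  rw [Polynomial.algebraMap_apply]
  refine (natDegree_C_mul_le _ _).trans <| (natDegree_prod_le _ _).trans ?_
  calc ∑ j, (diffMonomial (α j) (z j) (C (w j))).natDegree ≤ ∑ _j : σ, 1 :=
        sum_le_sum fun j _ => by
          rw [diffMonomial, ← C_pow, ← C_pow, ← C_eq_natCast, mul_comm, ← mul_assoc, ← C_mul]
          exact (natDegree_add_le _ _).trans
            (max_le (by simp) ((natDegree_C_mul_le _ _).trans (hz j)))
    _ = Fintype.card σ := by simp

theorem tendsto_diffEval_const [Algebra K ℂ] (p : MvPolynomial σ K) (z : σ → ℂ) :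
    Tendsto (fun ε : ℝ => diffEval p z fun _ => (ε : ℂ)) (𝓝 0) (𝓝 (diffEval p z 0)) := by
  have : Continuous fun t : ℂ => diffEval p z fun _ => t := by
    simp only [diffEval_eq_sum, diffMonomial]
    fun_prop
  simpa [Function.comp_def, Pi.zero_def] using (this.comp Complex.continuous_ofReal).tendsto 0

theorem diffEval_zero_right_eq_zero_of_hstable {p : MvPolynomial σ ℝ} (hp : Hstable p) {z : σ → ℂ}
    (hz : ∀ j, 0 < (z j).re) (h : diffEval p z 0 = 0) (y : σ → ℂ) : diffEval p y 0 = 0 := by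
  set L : σ → ℂ[X] := fun j => C (y j - z j) * X + C (z j)
  have hL (s : ℂ) : (fun j => (L j).eval s) = fun j => (y j - z j) * s + z j := by simp [L]
  obtain ⟨δ, hδ, hball⟩ : ∃ δ > 0, ∀ s ∈ closedBall (0 : ℂ) δ, ∀ j, 0 < ((L j).eval s).re :=
    nhds_basis_closedBall.eventually_iff.1 <| eventually_all.2 fun j =>
      ((Complex.continuous_re.comp (Polynomial.continuous _)).tendsto 0).eventually_const_lt
        (by simpa [L] using hz j)
  have hT : diffEval p L 0 = 0 := by
    refine eq_zero_of_tendsto_eval (l := 𝓝[>] (0 : ℝ))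
      (P := fun ε => diffEval p L fun _ => C (ε : ℂ)) (d := Fintype.card σ) hδ ?_ (fun s => ?_) ?_
    · filter_upwards [self_mem_nhdsWithin] with ε (hε : 0 < ε)
      refine ⟨natDegree_diffEval_le _ (fun j => natDegree_linear_le) _, fun s hs => ?_⟩
      rw [eval_diffEval]
      exact diffEval_ne_zero hp (hball s hs) fun _ => by simpa using hε
    · simpa [eval_diffEval, ← Pi.zero_def] using
        (tendsto_diffEval_const p _).mono_left nhdsWithin_le_nhds
    · rw [eval_diffEval]
      simpa [hL, ← Pi.zero_def] using h
  simpa [eval_diffEval, hL, ← Pi.zero_def] using congrArg (eval 1) hT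

theorem prod_diffMonomial_sum_single_zero {ι : Type*} [Fintype ι] [DecidableEq σ] (g : ι → σ)
    (z : σ → R) :
    ∏ j, diffMonomial ((∑ i, Finsupp.single (g i) 1 : σ →₀ ℕ) j) (z j) 0 =
      if Function.Injective g then ∏ i, z (g i) else 0 := by
  classical
  have hcount (j : σ) : (∑ i, Finsupp.single (g i) 1 : σ →₀ ℕ) j = #{i | g i = j} := by
    simp [Finsupp.finsetSum_apply, Finsupp.single_apply, Finset.sum_boole]
  simp_rw [hcount]
  split_ifs with hg
  · rw [← prod_image hg.injOn, ← univ_inter (image g univ), ← prod_ite_mem]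
    refine prod_congr rfl fun j _ => ?_
    split_ifs with hj
    · obtain ⟨i, -, rfl⟩ := mem_image.1 hj
      have : #{i' | g i' = g i} = 1 := card_eq_one.2 ⟨i, by ext; simp [hg.eq_iff]⟩
      simp [this, diffMonomial]
    · have : #{i | g i = j} = 0 := card_eq_zero.2 <|
        filter_eq_empty_iff.2 fun i _ h => hj (h ▸ mem_image_of_mem g (mem_univ i))
      simp [this, diffMonomial]
  · obtain ⟨i, i', hgi, hii⟩ : ∃ i i', g i = g i' ∧ i ≠ i' := by
      simpa [Function.Injective] using hg
    refine prod_eq_zero (mem_univ (g i)) ?_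
    have : 2 ≤ #{k | g k = g i} := (card_pair hii).symm.le.trans <| card_le_card fun k => by
      simp only [mem_insert, mem_singleton, mem_filter]
      rintro (rfl | rfl) <;> simp [hgi]
    obtain ⟨n, hn⟩ := Nat.exists_eq_add_of_le this
    simp [hn, diffMonomial]

end DiffEval

section RowForms

variable {M N : ℕ}

noncomputable def rowFormsProd (A : Matrix (Fin M) (Fin N) ℝ) : MvPolynomial (Fin N) ℝ :=
  ∏ i, ∑ j, MvPolynomial.C (A i j) * MvPolynomial.X j

theorem rowFormsProd_eq_sum_monomial (A : Matrix (Fin M) (Fin N) ℝ) :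
    rowFormsProd A = ∑ g : Fin M → Fin N,
      MvPolynomial.monomial (∑ i, Finsupp.single (g i) 1) (∏ i, A i (g i)) := by
  simp_rw [rowFormsProd, prod_univ_sum, Fintype.piFinset_univ, MvPolynomial.C_mul_X_eq_monomial,
    MvPolynomial.monomial_sum_prod]

theorem diffEval_rowFormsProd_zero (A : Matrix (Fin M) (Fin N) ℝ) (z : Fin N → ℂ) :
    diffEval (rowFormsProd A) z 0 =
      ∑ g ∈ univ.filter Function.Injective, ∏ i, (A i (g i) * z (g i) : ℂ) := by
  rw [rowFormsProd_eq_sum_monomial, diffEval_sum_monomial, sum_filter]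
  refine sum_congr rfl fun g _ => ?_
  simp only [Pi.zero_apply, prod_diffMonomial_sum_single_zero]
  split_ifs <;> simp [prod_mul_distrib]

theorem aeval_FApoly (A : Matrix (Fin M) (Fin N) ℝ) (z : Fin N → ℂ) :
    MvPolynomial.aeval z (FApoly A) =
      ∑ g ∈ univ.filter Function.Injective, ∏ i, (A i (g i) * z (g i) : ℂ) := by
  simp only [FApoly, permanent, Matrix.of_apply, map_sum, map_mul, map_prod, MvPolynomial.aeval_C,
    MvPolynomial.aeval_X, Complex.coe_algebraMap, sum_mul]
  rw [sum_sigma']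
  refine sum_bij (fun x _ i => x.1.1.orderEmbOfFin (mem_powersetCard.1 x.1.2).2 (x.2 i))
    ?_ ?_ ?_ ?_
  · rintro ⟨⟨S, hS⟩, σ⟩ -
    exact mem_filter.2 ⟨mem_univ _, (S.orderEmbOfFin _).injective.comp σ.injective⟩
  · rintro ⟨⟨S, hS⟩, σ⟩ - ⟨⟨S', hS'⟩, σ'⟩ - h
    have hrange {S : Finset (Fin N)} (hS : S.card = M) (σ : Equiv.Perm (Fin M)) :
        Set.range (fun i => S.orderEmbOfFin hS (σ i)) = S := by
      rw [← Function.comp_def, σ.surjective.range_comp, range_orderEmbOfFin]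
    obtain rfl : S = S' := coe_injective <|
      (hrange _ σ).symm.trans ((congrArg Set.range h).trans (hrange _ σ'))
    obtain rfl : σ = σ' := Equiv.ext fun i => (S.orderEmbOfFin _).injective (congrFun h i)
    rfl
  · intro g hg
    replace hg := (mem_filter.1 hg).2
    have hS : (univ.image g).card = M := by simp [card_image_of_injective _ hg]
    let τ : Fin M → Fin M := fun i =>
      ((univ.image g).orderIsoOfFin hS).symm ⟨g i, mem_image_of_mem g (mem_univ i)⟩
    have hτ : τ.Injective := fun i i' h => hg (by simpa [τ] using h)
    refine ⟨⟨⟨univ.image g, mem_powersetCard.2 ⟨subset_univ _, hS⟩⟩,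
      Equiv.ofBijective τ hτ.bijective_of_finite⟩, by simp, funext fun i => ?_⟩
    simp [τ, ← coe_orderIsoOfFin_apply]
  · rintro ⟨⟨S, hS⟩, σ⟩ -
    rw [prod_mul_distrib]
    congr 1
    rw [Equiv.prod_comp σ (fun i => z (S.orderEmbOfFin _ i))]
    change ∏ j ∈ S, z j = _
    exact (prod_coe_sort S z).symm.trans
      ((S.orderIsoOfFin (mem_powersetCard.1 hS).2).toEquiv.prod_comp (z ·)).symm

theorem hstable_rowFormsProd {A : Matrix (Fin M) (Fin N) ℝ} (hA : ∀ i j, 0 ≤ A i j)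
    (hrow : ∀ i, ∃ j, A i j ≠ 0) : Hstable (rowFormsProd A) := by
  intro w hw
  simp only [rowFormsProd, map_prod, map_sum, map_mul, MvPolynomial.aeval_C, MvPolynomial.aeval_X,
    Complex.coe_algebraMap]
  refine prod_ne_zero_iff.2 fun i _ h => ?_
  obtain ⟨j, hj⟩ := hrow i
  have : 0 < (∑ j, (A i j : ℂ) * w j).re := by
    simp only [Complex.re_sum, Complex.re_ofReal_mul]
    exact sum_pos' (fun j _ => mul_nonneg (hA i j) (hw j).le)
      ⟨j, mem_univ j, mul_pos ((hA i j).lt_of_ne' hj) (hw j)⟩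
  simp [h] at this

end RowForms

theorem MvPolynomial.eq_zero_of_forall_aeval_complex_eq_zero {σ : Type*} {p : MvPolynomial σ ℝ}
    (h : ∀ z : σ → ℂ, aeval z p = 0) : p = 0 :=
  MvPolynomial.funext fun x => by
    have := h (algebraMap ℝ ℂ ∘ x)
    rwa [aeval_def, ← eval₂_comp, map_eq_zero_iff _ (algebraMap ℝ ℂ).injective,
      ← map_zero (eval x)] at this

theorem stmt1_general {M N : ℕ} (A : Matrix (Fin M) (Fin N) ℝ)
    (hA : ∀ i j, 0 ≤ A i j) :
    FApoly A = 0 ∨ Hstable (FApoly A) := by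
  rcases eq_or_ne (FApoly A) 0 with hF | hF
  · exact Or.inl hF
  refine Or.inr fun z hz hz0 =>
    hF <| MvPolynomial.eq_zero_of_forall_aeval_complex_eq_zero fun y => ?_
  rw [aeval_FApoly, ← diffEval_rowFormsProd_zero] at hz0 ⊢
  by_cases hrow : ∀ i, ∃ j, A i j ≠ 0
  · exact diffEval_zero_right_eq_zero_of_hstable (hstable_rowFormsProd hA hrow) hz hz0 y
  · obtain ⟨i, hi⟩ : ∃ i, ∀ j, A i j = 0 := by simpa using hrow
    have : rowFormsProd A = 0 := prod_eq_zero (mem_univ i) (by simp [hi])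
    simp [this, diffEval_eq_sum]

theorem stmt1 {M N : ℕ} (hMN : M < N) (A : Matrix (Fin M) (Fin N) ℝ)
    (hA : ∀ i j, 0 ≤ A i j) :
    FApoly A = 0 ∨ Hstable (FApoly A) :=
  stmt1_general A hA
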